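/- arXiv:2107.12094 — 2 statements merged into one kernel-verified Lean document; each statement's English description precedes it below -/
import Mathlib

section
/- Let $\Phi$ and $\phi$ denote the standard normal CDF and density. Then the function $z\mapsto (\Phi/\phi)'(z)=1+z\,\Phi(z)/\phi(z)$ is increasing on $\mathbb{R}$ and takes values in $(0,\infty)$. -/
/-!
Put `A = φ + z Φ` and `B = (1 + z²) Φ + z φ`. From `φ' = -z φ` one gets `Φ' = φ`, `A' = Φ`,
`B' = 2 A` and `(1 + z Φ / φ)' = B / φ`. Gaussian tails make `Φ`, `A` and `B` vanish at `-∞`, so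
each of them is positive as soon as its derivative is: `φ > 0 ⇒ Φ > 0 ⇒ A > 0 ⇒ B > 0`.
Then `1 + z Φ / φ = A / φ > 0`, and its derivative `B / φ` is positive.
-/

open Set MeasureTheory Real Filter Topology Asymptotics

lemma pos_of_hasDerivAt_pos_of_tendsto_atBot {f f' : ℝ → ℝ} (hf : ∀ z, HasDerivAt f (f' z) z)
    (hf' : ∀ z, 0 < f' z) (hlim : Tendsto f atBot (𝓝 0)) (z : ℝ) : 0 < f z :=
  have hmono := strictMono_of_hasDerivAt_pos hf hf'
  (hmono.monotone.le_of_tendsto hlim (z - 1)).trans_lt (hmono (sub_one_lt z))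

lemma tendsto_pow_mul_exp_atBot_nhds_zero (n : ℕ) :
    Tendsto (fun z : ℝ => z ^ n * exp z) atBot (𝓝 0) := by
  have h := ((tendsto_pow_mul_exp_neg_atTop_nhds_zero n).comp tendsto_neg_atBot_atTop).const_mul
    ((-1 : ℝ) ^ n)
  rw [mul_zero] at h
  refine h.congr fun z => ?_
  simp only [Function.comp_apply, neg_neg, ← mul_assoc, ← mul_pow, neg_one_mul]

lemma tendsto_pow_mul_atBot_of_isBigO_exp {g : ℝ → ℝ} (hg : g =O[atBot] exp) (n : ℕ) :
    Tendsto (fun z => z ^ n * g z) atBot (𝓝 0) :=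
  ((isBigO_refl (fun z : ℝ => z ^ n) atBot).mul hg).trans_tendsto
    (tendsto_pow_mul_exp_atBot_nhds_zero n)

lemma hasDerivAt_integral_Iic {E : Type*} [NormedAddCommGroup E] [NormedSpace ℝ E]
    [CompleteSpace E]
    {f : ℝ → E} (hf : Continuous f) (hfi : Integrable f) (z : ℝ) :
    HasDerivAt (fun x => ∫ t in Iic x, f t) (f z) z := by
  have hsplit : (fun x => ∫ t in Iic x, f t) = fun x => (∫ t in Iic 0, f t) + ∫ t in 0..x, f t := by
    funext x
    rw [← intervalIntegral.integral_Iic_sub_Iic hfi.integrableOn hfi.integrableOn,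
      add_sub_cancel]
  rw [hsplit]
  exact (hf.integral_hasStrictDerivAt 0 z).hasDerivAt.const_add _

section StandardNormal

variable {φ : ℝ → ℝ}

lemma hasDerivAt_gaussian (hφ : ∀ z, φ z = (√(2 * π))⁻¹ * exp (-z ^ 2 / 2)) (z : ℝ) :
    HasDerivAt φ (-z * φ z) z := by
  rw [funext hφ]
  have hexp : HasDerivAt (fun z : ℝ => -z ^ 2 / 2) (-z) z := by
    refine ((hasDerivAt_pow 2 z).neg.div_const 2).congr_deriv ?_
    norm_num
    ring
  refine (hexp.exp.const_mul (√(2 * π))⁻¹).congr_deriv ?_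
  ring

lemma integrable_gaussian (hφ : ∀ z, φ z = (√(2 * π))⁻¹ * exp (-z ^ 2 / 2)) : Integrable φ := by
  rw [funext hφ]
  convert (integrable_exp_neg_mul_sq (one_half_pos (α := ℝ))).const_mul (√(2 * π))⁻¹ using 4
  ring

lemma gaussian_le_exp (hφ : ∀ z, φ z = (√(2 * π))⁻¹ * exp (-z ^ 2 / 2)) {z : ℝ}
    (hz : z ≤ -2) : φ z ≤ (√(2 * π))⁻¹ * exp z := by
  rw [hφ]
  gcongr
  nlinarith

lemma integral_Iic_gaussian_le_exp (hφ : ∀ z, φ z = (√(2 * π))⁻¹ * exp (-z ^ 2 / 2)) {z : ℝ}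
    (hz : z ≤ -2) : ∫ t in Iic z, φ t ≤ (√(2 * π))⁻¹ * exp z := by
  calc ∫ t in Iic z, φ t ≤ ∫ t in Iic z, (√(2 * π))⁻¹ * exp t :=
        setIntegral_mono_on (integrable_gaussian hφ).integrableOn
          ((integrableOn_exp_Iic z).const_mul _) measurableSet_Iic
          fun t ht => gaussian_le_exp hφ (le_trans ht hz)
    _ = (√(2 * π))⁻¹ * exp z := by rw [integral_const_mul, integral_exp_Iic]

lemma gaussian_isBigO_exp (hφ : ∀ z, φ z = (√(2 * π))⁻¹ * exp (-z ^ 2 / 2)) :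
    φ =O[atBot] exp := by
  refine IsBigO.of_bound (√(2 * π))⁻¹ ?_
  filter_upwards [eventually_le_atBot (-2 : ℝ)] with z hz
  rw [norm_of_nonneg (by rw [hφ]; positivity), norm_of_nonneg (exp_pos z).le]
  exact gaussian_le_exp hφ hz

lemma integral_Iic_gaussian_isBigO_exp (hφ : ∀ z, φ z = (√(2 * π))⁻¹ * exp (-z ^ 2 / 2)) :
    (fun z => ∫ t in Iic z, φ t) =O[atBot] exp := by
  refine IsBigO.of_bound (√(2 * π))⁻¹ ?_
  filter_upwards [eventually_le_atBot (-2 : ℝ)] with z hz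
  have hnonneg : 0 ≤ ∫ t in Iic z, φ t :=
    setIntegral_nonneg measurableSet_Iic fun t _ => by rw [hφ]; positivity
  rw [norm_of_nonneg hnonneg, norm_of_nonneg (exp_pos z).le]
  exact integral_Iic_gaussian_le_exp hφ hz

end StandardNormal

section MillsRatio

variable {φ Φ : ℝ → ℝ} {z : ℝ}

lemma hasDerivAt_pdf_add_mul_cdf (hφ : HasDerivAt φ (-z * φ z) z) (hΦ : HasDerivAt Φ (φ z) z) :
    HasDerivAt (fun z => φ z + z * Φ z) (Φ z) z := by
  refine (hφ.add ((hasDerivAt_id z).mul hΦ)).congr_deriv ?_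
  simp only [id_eq]
  ring

lemma hasDerivAt_one_add_sq_mul_cdf_add_mul_pdf (hφ : HasDerivAt φ (-z * φ z) z)
    (hΦ : HasDerivAt Φ (φ z) z) :
    HasDerivAt (fun z => (1 + z ^ 2) * Φ z + z * φ z) (2 * (φ z + z * Φ z)) z := by
  have hsq : HasDerivAt (fun z : ℝ => 1 + z ^ 2) (2 * z) z := by
    simpa using (hasDerivAt_pow 2 z).const_add 1
  refine ((hsq.mul hΦ).add ((hasDerivAt_id z).mul hφ)).congr_deriv ?_
  simp only [id_eq]
  ring

lemma hasDerivAt_one_add_mul_cdf_div_pdf (hφ : HasDerivAt φ (-z * φ z) z)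
    (hΦ : HasDerivAt Φ (φ z) z) (hφ0 : φ z ≠ 0) :
    HasDerivAt (fun z => 1 + z * Φ z / φ z) (((1 + z ^ 2) * Φ z + z * φ z) / φ z) z := by
  refine ((((hasDerivAt_id z).mul hΦ).div hφ hφ0).const_add 1).congr_deriv ?_
  simp only [Pi.mul_apply, id_eq]
  field_simp
  ring

end MillsRatio

/-- The function `z ↦ (Φ/φ)'(z) = 1 + z Φ(z)/φ(z)` (with `Φ`, `φ` the standard normal
CDF and density) is strictly increasing and positive on `ℝ`. -/
theorem mills_ratio_derivative_increasing_pos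
    (φ Φ : ℝ → ℝ)
    (hφ : ∀ z, φ z = (Real.sqrt (2 * π))⁻¹ * Real.exp (-z ^ 2 / 2))
    (hΦ : ∀ z, Φ z = ∫ t in Iic z, φ t) :
    StrictMono (fun z => 1 + z * Φ z / φ z) ∧
      ∀ z, 0 < 1 + z * Φ z / φ z := by
  have hφpos : ∀ z, 0 < φ z := fun z => by rw [hφ]; positivity
  have hφ' := hasDerivAt_gaussian hφ
  have hΦ' : ∀ z, HasDerivAt Φ (φ z) z := by
    rw [funext hΦ]
    exact hasDerivAt_integral_Iic (continuous_iff_continuousAt.2 fun z => (hφ' z).continuousAt)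
      (integrable_gaussian hφ)
  have hφ_tail := tendsto_pow_mul_atBot_of_isBigO_exp (gaussian_isBigO_exp hφ)
  have hΦ_tail := tendsto_pow_mul_atBot_of_isBigO_exp (g := Φ) <| by
    simpa only [← funext hΦ] using integral_Iic_gaussian_isBigO_exp hφ
  have hΦpos := pos_of_hasDerivAt_pos_of_tendsto_atBot hΦ' hφpos (by simpa using hΦ_tail 0)
  have hApos := pos_of_hasDerivAt_pos_of_tendsto_atBot
    (fun z => hasDerivAt_pdf_add_mul_cdf (hφ' z) (hΦ' z)) hΦpos
    (by simpa using (hφ_tail 0).add (hΦ_tail 1))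
  have hBpos := pos_of_hasDerivAt_pos_of_tendsto_atBot
    (fun z => hasDerivAt_one_add_sq_mul_cdf_add_mul_pdf (hφ' z) (hΦ' z))
    (fun z => mul_pos two_pos (hApos z))
    (by simpa [add_mul] using ((hΦ_tail 0).add (hΦ_tail 2)).add (hφ_tail 1))
  refine ⟨strictMono_of_hasDerivAt_pos
    (fun z => hasDerivAt_one_add_mul_cdf_div_pdf (hφ' z) (hΦ' z) (hφpos z).ne')
    (fun z => div_pos (hBpos z) (hφpos z)), fun z => ?_⟩
  rw [← div_self (hφpos z).ne', ← add_div]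
  exact div_pos (hApos z) (hφpos z)
end

section
/- Let $f:\mathbb{R}\to(0,\infty)$ be a log-concave probability density with CDF $F$ and survival function $\overline F=1-F$. Then both $x\mapsto F(x)/f(x)$ and $x\mapsto -\overline F(x)/f(x)$ are nondecreasing on $\mathbb{R}$. -/
open Set MeasureTheory

/-! For a log-concave `f`, `f a * f b ≤ f c * f d` whenever `c, d ∈ [a, b]` and
`a + b = c + d`. For `x ≤ y`, translating `∫ s in Iic x, f s` by `y - x` and comparing integrands
pointwise gives `F x * f y ≤ F y * f x`; the same argument on the right tails gives
`(1 - F y) * f x ≤ (1 - F x) * f y`. -/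

theorem ConcaveOn.add_le_add_of_add_eq {s : Set ℝ} {g : ℝ → ℝ} (hg : ConcaveOn ℝ s g)
    {a b c d : ℝ} (ha : a ∈ s) (hb : b ∈ s) (hac : a ≤ c) (hcb : c ≤ b) (h : a + b = c + d) :
    g a + g b ≤ g c + g d := by
  obtain rfl | hab := (hac.trans hcb).eq_or_lt
  · obtain rfl : c = a := le_antisymm hcb hac
    obtain rfl : d = c := by linarith
    rfl
  -- `c` and `d` are the two convex combinations of `a` and `b` with swapped weights.
  set t := (b - c) / (b - a)
  have hba : 0 < b - a := sub_pos.2 hab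
  have ht0 : 0 ≤ t := div_nonneg (sub_nonneg.2 hcb) hba.le
  have ht1 : t ≤ 1 := (div_le_one hba).2 (by linarith)
  have hc : t * a + (1 - t) * b = c := by simp only [t]; field_simp; ring
  have hd : (1 - t) * a + t * b = d := by linear_combination h - hc
  have h₁ := hg.2 ha hb ht0 (sub_nonneg.2 ht1) (add_sub_cancel t 1)
  have h₂ := hg.2 ha hb (sub_nonneg.2 ht1) ht0 (sub_add_cancel 1 t)
  simp only [smul_eq_mul, hc, hd] at h₁ h₂
  linear_combination h₁ + h₂

theorem mul_le_mul_of_concaveOn_log {f : ℝ → ℝ} (hpos : ∀ x, 0 < f x)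
    (hlc : ConcaveOn ℝ univ (fun x => Real.log (f x))) {a b c d : ℝ}
    (hac : a ≤ c) (hcb : c ≤ b) (h : a + b = c + d) :
    f a * f b ≤ f c * f d := by
  have := Real.exp_le_exp.2 (hlc.add_le_add_of_add_eq (mem_univ a) (mem_univ b) hac hcb h)
  rwa [Real.exp_add, Real.exp_add, Real.exp_log (hpos a), Real.exp_log (hpos b),
    Real.exp_log (hpos c), Real.exp_log (hpos d)] at this

theorem setIntegral_preimage_add_right {G E : Type*} [AddGroup G] [MeasurableSpace G]
    [MeasurableAdd G] [NormedAddCommGroup E] [NormedSpace ℝ E] (μ : Measure G)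
    [μ.IsAddRightInvariant] (f : G → E) (c : G) (T : Set G) :
    ∫ x in (· + c) ⁻¹' T, f (x + c) ∂μ = ∫ x in T, f x ∂μ :=
  (measurePreserving_add_right μ c).setIntegral_preimage_emb (measurableEmbedding_addRight c) f T

section LogConcave

variable {f : ℝ → ℝ} {x y : ℝ}

theorem integral_Iic_mul_le_of_concaveOn_log (hpos : ∀ x, 0 < f x)
    (hlc : ConcaveOn ℝ univ (fun x => Real.log (f x))) (hint : IntegrableOn f (Iic y))
    (hxy : x ≤ y) :
    (∫ s in Iic x, f s) * f y ≤ (∫ s in Iic y, f s) * f x := by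
  have hshift : ∫ s in Iic x, f s = ∫ s in Iic y, f (s + (x - y)) := by
    rw [← setIntegral_preimage_add_right volume f (x - y) (Iic x), preimage_add_const_Iic,
      sub_sub_cancel]
  rw [hshift, ← integral_mul_const, ← integral_mul_const]
  refine integral_mono_of_nonneg (ae_of_all _ fun s => (mul_pos (hpos _) (hpos y)).le)
    (hint.mul_const (f x)) (ae_restrict_of_forall_mem measurableSet_Iic fun s hs => ?_)
  dsimp only
  rw [mul_comm (f s)]
  exact mul_le_mul_of_concaveOn_log hpos hlc (by linarith [mem_Iic.1 hs]) hxy (by ring)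

theorem integral_Ioi_mul_le_of_concaveOn_log (hpos : ∀ x, 0 < f x)
    (hlc : ConcaveOn ℝ univ (fun x => Real.log (f x))) (hint : IntegrableOn f (Ioi x))
    (hxy : x ≤ y) :
    (∫ s in Ioi y, f s) * f x ≤ (∫ s in Ioi x, f s) * f y := by
  have hshift : ∫ s in Ioi y, f s = ∫ s in Ioi x, f (s + (y - x)) := by
    rw [← setIntegral_preimage_add_right volume f (y - x) (Ioi y), preimage_add_const_Ioi,
      sub_sub_cancel]
  rw [hshift, ← integral_mul_const, ← integral_mul_const]
  refine integral_mono_of_nonneg (ae_of_all _ fun s => (mul_pos (hpos _) (hpos x)).le)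
    (hint.mul_const (f y)) (ae_restrict_of_forall_mem measurableSet_Ioi fun s hs => ?_)
  dsimp only
  rw [mul_comm _ (f x), mul_comm (f s)]
  exact mul_le_mul_of_concaveOn_log hpos hlc hxy (by linarith [mem_Ioi.1 hs]) (by ring)

end LogConcave

theorem logConcave_hazard_monotone_general
    (f : ℝ → ℝ) (hfpos : ∀ x, 0 < f x)
    (hflc : ConcaveOn ℝ univ (fun x => Real.log (f x)))
    (hfint : Integrable f) (hfprob : ∫ x, f x = 1)
    (F : ℝ → ℝ) (hF : ∀ x, F x = ∫ y in Iic x, f y) :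
    Monotone (fun x => F x / f x) ∧ Monotone (fun x => -(1 - F x) / f x) := by
  have hsurv (x : ℝ) : 1 - F x = ∫ t in Ioi x, f t := by
    rw [← hfprob, hF, ← intervalIntegral.integral_Iic_add_Ioi hfint.integrableOn hfint.integrableOn,
      add_sub_cancel_left]
  refine ⟨fun x y hxy => ?_, fun x y hxy => ?_⟩
  · dsimp only
    rw [div_le_div_iff₀ (hfpos x) (hfpos y), hF, hF]
    exact integral_Iic_mul_le_of_concaveOn_log hfpos hflc hfint.integrableOn hxy
  · dsimp only
    rw [hsurv, hsurv, neg_div, neg_div, neg_le_neg_iff, div_le_div_iff₀ (hfpos y) (hfpos x)]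
    exact integral_Ioi_mul_le_of_concaveOn_log hfpos hflc hfint.integrableOn hxy

/-- For a positive log-concave probability density `f` with CDF `F` and survival function
`1 - F`, both `F/f` and `-(1-F)/f` are nondecreasing on `ℝ`. -/
theorem logConcave_hazard_monotone
    (f : ℝ → ℝ) (hfmeas : Measurable f) (hfpos : ∀ x, 0 < f x)
    (hflc : ConcaveOn ℝ univ (fun x => Real.log (f x)))
    (hfint : Integrable f) (hfprob : ∫ x, f x = 1)
    (F : ℝ → ℝ) (hF : ∀ x, F x = ∫ y in Iic x, f y) :
    Monotone (fun x => F x / f x) ∧ Monotone (fun x => -(1 - F x) / f x) :=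
  logConcave_hazard_monotone_general f hfpos hflc hfint hfprob F hF
end
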